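/- arXiv:1905.13436 — 3 statements merged into one kernel-verified Lean document; each statement's English description precedes it below -/
import Mathlib

section
/- (MLE works for independent mistakes.) Consider the conditionally independent experts model: X and C finite nonempty sets, μ : X × C → ℝ a joint pmf with μ_X(x) = Σ_y μ(x,y) > 0 for all x, confusion matrices C^1,…,C^M which are transition matrices over C, and joint pmf P(x, ȳ) = Σ_y μ(x,y) Π_{m=1}^M C^m_{y, ȳ_m}. Define h*(x)_c = μ(x,c)/μ_X(x). Then for every classifier h : X → (probability vectors over C) and every choice of transition matrices W^1,…,W^M over C satisfying Σ_c h(x)_c Π_m W^m_{c,ȳ_m} > 0 whenever P(x,ȳ) > 0, the expected log-likelihood satisfies Σ_{x,ȳ : P(x,ȳ)>0} P(x,ȳ) · log( Σ_c h(x)_c Π_{m=1}^M W^m_{c,ȳ_m} ) ≤ Σ_{x,ȳ : P(x,ȳ)>0} P(x,ȳ) · log( Σ_c h*(x)_c Π_{m=1}^M C^m_{c,ȳ_m} ). In other words, (h*, C^1,…,C^M) is a maximizer of the expected log-likelihood. -/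
open Finset

/-- A transition matrix over a finite class set `C`: nonnegative entries,
every row sums to 1. -/
def IsTransitionMatrix {C : Type*} [Fintype C] (W : C → C → ℝ) : Prop :=
  (∀ c c', 0 ≤ W c c') ∧ (∀ c, ∑ c', W c c' = 1)

/-- MLE works for independent mistakes: in the conditionally
independent experts model, the Bayes posterior classifier
`h*(x)_c = μ(x,c)/μ_X(x)` together with the true confusion matrices
`C^1, …, C^M` maximizes the expected log-likelihood over all classifiers `h`
and all transition matrices `W^1, …, W^M`. -/
theorem mle_works_for_independent_mistakes
    {X C : Type*} [Fintype X] [Fintype C] [Nonempty X] [Nonempty C] {M : ℕ} (hM : 0 < M)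
    (μ : X × C → ℝ) (hμ_nonneg : ∀ p, 0 ≤ μ p) (hμ_sum : ∑ p : X × C, μ p = 1)
    (hμX : ∀ x : X, 0 < ∑ y : C, μ (x, y))
    (Cm : Fin M → C → C → ℝ) (hCm : ∀ m, IsTransitionMatrix (Cm m))
    (P : X → (Fin M → C) → ℝ)
    (hP : ∀ x yb, P x yb = ∑ y : C, μ (x, y) * ∏ m : Fin M, Cm m y (yb m))
    (h : X → C → ℝ) (h_nonneg : ∀ x c, 0 ≤ h x c) (h_sum : ∀ x, ∑ c, h x c = 1)
    (W : Fin M → C → C → ℝ) (hW : ∀ m, IsTransitionMatrix (W m))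
    (hpos : ∀ x yb, 0 < P x yb →
      0 < ∑ c : C, h x c * ∏ m : Fin M, W m c (yb m)) :
    ∑ x : X, ∑ yb ∈ univ.filter (fun yb : Fin M → C => 0 < P x yb),
        P x yb * Real.log (∑ c : C, h x c * ∏ m : Fin M, W m c (yb m)) ≤
    ∑ x : X, ∑ yb ∈ univ.filter (fun yb : Fin M → C => 0 < P x yb),
        P x yb * Real.log (∑ c : C,
          (μ (x, c) / ∑ y : C, μ (x, y)) * ∏ m : Fin M, Cm m c (yb m)) := by
  classical
  -- sums over all tuples yb of products of rows of a transition matrix equal 1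
  have hsumprod : ∀ (V : Fin M → C → C → ℝ), (∀ m, IsTransitionMatrix (V m)) → ∀ c : C,
      ∑ yb : Fin M → C, ∏ m, V m c (yb m) = 1 := by
    intro V hV c
    rw [← Fintype.piFinset_univ, ← Finset.prod_univ_sum]
    simp [(hV · |>.2 c)]
  apply Finset.sum_le_sum
  intro x _
  set A := ∑ y : C, μ (x, y) with hAdef
  have hA : 0 < A := hμX x
  set Q : (Fin M → C) → ℝ := fun yb => ∑ c : C, h x c * ∏ m : Fin M, W m c (yb m) with hQdef
  have hQnonneg : ∀ yb, 0 ≤ Q yb := fun yb =>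
    Finset.sum_nonneg fun c _ => mul_nonneg (h_nonneg x c)
      (Finset.prod_nonneg fun m _ => (hW m).1 c (yb m))
  have hPnonneg : ∀ yb, 0 ≤ P x yb := fun yb => by
    rw [hP]
    exact Finset.sum_nonneg fun y _ => mul_nonneg (hμ_nonneg _)
      (Finset.prod_nonneg fun m _ => (hCm m).1 y (yb m))
  have hQsum : ∑ yb : Fin M → C, Q yb = 1 := by
    rw [hQdef, Finset.sum_comm]
    simp only [← Finset.mul_sum]
    simp [fun c => hsumprod W hW c, h_sum x]
  have hPsum : ∑ yb : Fin M → C, P x yb = A := by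
    simp only [hP, hAdef]
    rw [Finset.sum_comm]
    simp only [← Finset.mul_sum]
    simp [fun c => hsumprod Cm hCm c]
  set S := univ.filter (fun yb : Fin M → C => 0 < P x yb) with hSdef
  -- the sum restricted to S equals the full sum of P
  have hPS : ∑ yb ∈ S, P x yb = A := by
    rw [← hPsum]
    apply Finset.sum_subset (Finset.filter_subset _ _)
    intro yb _ hyb
    simp only [hSdef, Finset.mem_filter, Finset.mem_univ, true_and, not_lt] at hyb
    exact le_antisymm hyb (hPnonneg yb)
  have hQS : ∑ yb ∈ S, Q yb ≤ 1 := by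
    rw [← hQsum]
    exact Finset.sum_le_sum_of_subset_of_nonneg (Finset.filter_subset _ _)
      fun yb _ _ => hQnonneg yb
  -- rewrite the RHS logarithm as log (P x yb / A)
  have hRHS : ∀ yb ∈ S,
      (∑ c : C, (μ (x, c) / ∑ y : C, μ (x, y)) * ∏ m : Fin M, Cm m c (yb m))
        = P x yb / A := by
    intro yb _
    rw [hP, ← hAdef, Finset.sum_div]
    exact Finset.sum_congr rfl fun c _ => by ring
  calc ∑ yb ∈ S, P x yb * Real.log (Q yb)
      ≤ ∑ yb ∈ S, (A * Q yb - P x yb + P x yb * Real.log (P x yb / A)) := by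
        apply Finset.sum_le_sum
        intro yb hyb
        have hPyb : 0 < P x yb := (Finset.mem_filter.mp hyb).2
        have hQyb : 0 < Q yb := hpos x yb hPyb
        have ht : 0 < Q yb * A / P x yb := by positivity
        have hlog : Real.log (Q yb * A / P x yb) ≤ Q yb * A / P x yb - 1 :=
          Real.log_le_sub_one_of_pos ht
        have hsplit : Q yb = (Q yb * A / P x yb) * (P x yb / A) := by
          field_simp
        have hlogQ : Real.log (Q yb)
            = Real.log (Q yb * A / P x yb) + Real.log (P x yb / A) := by
          rw [← Real.log_mul (ne_of_gt ht) (ne_of_gt (by positivity)), ← hsplit]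
        rw [hlogQ, mul_add]
        have : P x yb * Real.log (Q yb * A / P x yb) ≤ A * Q yb - P x yb := by
          calc P x yb * Real.log (Q yb * A / P x yb)
              ≤ P x yb * (Q yb * A / P x yb - 1) :=
                mul_le_mul_of_nonneg_left hlog hPyb.le
            _ = A * Q yb - P x yb := by field_simp
        linarith
    _ = (∑ yb ∈ S, (A * Q yb - P x yb)) + ∑ yb ∈ S, P x yb * Real.log (P x yb / A) := by
        rw [← Finset.sum_add_distrib]
    _ ≤ ∑ yb ∈ S, P x yb * Real.log (P x yb / A) := by
        have : ∑ yb ∈ S, (A * Q yb - P x yb) ≤ 0 := by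
          rw [Finset.sum_sub_distrib, hPS, ← Finset.mul_sum]
          nlinarith
        linarith
    _ = ∑ yb ∈ S, P x yb * Real.log (∑ c : C,
          (μ (x, c) / ∑ y : C, μ (x, y)) * ∏ m : Fin M, Cm m c (yb m)) := by
        exact Finset.sum_congr rfl fun yb hyb => by rw [hRHS yb hyb]
end

section
/- In the correlated-mistakes example, for every choice of transition matrices W^1,…,W^{101} over {0,1} all of whose entries are strictly positive, the expected log-likelihood of the Bayes posterior classifier h* is at most 100·log(1/2): Σ_{c,c' ∈ {0,1}} (1/4) · log( W^1_{c,c} · Π_{m=2}^{101} W^m_{c,c'} ) ≤ 100 · log(1/2). -/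
open Real Finset

lemma sum_log_le_card_mul_log_inv_card {ι : Type*} [Fintype ι] {p : ι → ℝ}
    (hp : ∀ i, 0 < p i) (hsum : ∑ i, p i = 1) :
    ∑ i, log (p i) ≤ Fintype.card ι * log (Fintype.card ι)⁻¹ := by
  have hn : (0 : ℝ) < Fintype.card ι := by
    have : Nonempty ι := by
      by_contra h
      simp [not_nonempty_iff.mp h] at hsum
    exact_mod_cast Fintype.card_pos
  have hjensen := strictConcaveOn_log_Ioi.concaveOn.le_map_sum (t := univ)
    (w := fun _ => (Fintype.card ι : ℝ)⁻¹) (p := p) (fun _ _ => by positivity)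
    (by simp [hn.ne']) (fun i _ => hp i)
  simp only [smul_eq_mul, ← mul_sum, hsum, mul_one] at hjensen
  calc ∑ i, log (p i) = Fintype.card ι * ((Fintype.card ι : ℝ)⁻¹ * ∑ i, log (p i)) := by
        field_simp
    _ ≤ _ := mul_le_mul_of_nonneg_left hjensen hn.le

section

variable {C : Type*} [Fintype C]

lemma IsTransitionMatrix.le_one {W : C → C → ℝ}
    (hW : IsTransitionMatrix W) (c c' : C) : W c c' ≤ 1 :=
  hW.2 c ▸ single_le_sum (fun j _ => hW.1 c j) (mem_univ c')

lemma IsTransitionMatrix.sum_sum_log_le {W : C → C → ℝ}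
    (hW : IsTransitionMatrix W) (hpos : ∀ c c', 0 < W c c') :
    ∑ c, ∑ c', log (W c c') ≤ Fintype.card C * (Fintype.card C * log (Fintype.card C)⁻¹) :=
  calc ∑ c, ∑ c', log (W c c') ≤ ∑ _c : C, Fintype.card C * log (Fintype.card C)⁻¹ :=
        sum_le_sum fun c _ => sum_log_le_card_mul_log_inv_card (hpos c) (hW.2 c)
    _ = _ := by simp

theorem sum_sum_log_diag_mul_prod_le {M : ℕ}
    (W₀ : C → C → ℝ) (V : Fin M → C → C → ℝ) (hW₀ : IsTransitionMatrix W₀)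
    (hW₀pos : ∀ c, 0 < W₀ c c) (hV : ∀ m, IsTransitionMatrix (V m))
    (hVpos : ∀ m c c', 0 < V m c c') :
    ∑ c, ∑ c', log (W₀ c c * ∏ m, V m c c') ≤
      M * (Fintype.card C * (Fintype.card C * log (Fintype.card C)⁻¹)) := by
  have hsplit : ∀ c c', log (W₀ c c * ∏ m, V m c c') = log (W₀ c c) + ∑ m, log (V m c c') :=
    fun c c' => by
      rw [log_mul (hW₀pos c).ne' (prod_pos fun m _ => hVpos m c c').ne',
        log_prod fun m _ => (hVpos m c c').ne']
  have hdiag : ∑ c, ∑ _c' : C, log (W₀ c c) ≤ 0 :=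
    sum_nonpos fun c _ => sum_nonpos fun _ _ => log_nonpos (hW₀.1 c c) (hW₀.le_one c c)
  have hexperts : ∑ c, ∑ c', ∑ m, log (V m c c') ≤
      M * (Fintype.card C * (Fintype.card C * log (Fintype.card C)⁻¹)) :=
    calc ∑ c, ∑ c', ∑ m, log (V m c c') = ∑ m, ∑ c, ∑ c', log (V m c c') := by
          simp_rw [sum_comm (γ := Fin M)]
      _ ≤ ∑ _m : Fin M, Fintype.card C * (Fintype.card C * log (Fintype.card C)⁻¹) :=
          sum_le_sum fun m _ => (hV m).sum_sum_log_le (hVpos m)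
      _ = _ := by simp
  simp only [hsplit, sum_add_distrib]
  linarith

end

/-- in the correlated-mistakes example, for any transition
matrices `W^1, …, W^{101}` with strictly positive entries, the expected
log-likelihood of the Bayes posterior classifier is at most `100 log(1/2)`.
Expert 1 is `W 0` and expert `m ≥ 2` is `W m.succ` for `m : Fin 100`. -/
theorem bayes_loglik_le_hundred_log_half
    (W : Fin 101 → Fin 2 → Fin 2 → ℝ)
    (hW : ∀ m, IsTransitionMatrix (W m))
    (hWpos : ∀ m c c', 0 < W m c c') :
    ∑ c : Fin 2, ∑ c' : Fin 2,
        (1 / 4 : ℝ) * Real.log (W 0 c c * ∏ m : Fin 100, W m.succ c c') ≤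
      100 * Real.log (1 / 2) := by
  have h := sum_sum_log_diag_mul_prod_le (W 0) (fun m => W m.succ) (hW 0) (fun c => hWpos 0 c c)
    (fun m => hW m.succ) (fun m => hWpos m.succ)
  simp only [← mul_sum]
  norm_num at h ⊢
  linarith
end

section
/- In the correlated-mistakes example, the meaningless classifier h0 (which outputs the uniform distribution (1/2, 1/2) on every input) achieves expected log-likelihood 2·log(1/2) with a suitable choice of transition matrices: taking W^1 to be the matrix with all entries 1/2 and W^m, for every m ≥ 2, to be the 2 × 2 identity matrix, one has Σ_{c,c' ∈ {0,1}} (1/4) · log( Σ_{d ∈ {0,1}} (1/2) · W^1_{d,c} · Π_{m=2}^{101} W^m_{d,c'} ) = 2 · log(1/2). Consequently the maximal expected log-likelihood of h0 over all transition matrices is at least 2·log(1/2). -/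
/-- in the correlated-mistakes example, the meaningless classifier
`h0 = (1/2, 1/2)` achieves expected log-likelihood `2 log(1/2)` when `W^1` is
the all-`1/2` matrix and `W^m` (for `m ≥ 2`) is the identity matrix; hence
there exist transition matrices for which `h0`'s expected log-likelihood is at
least `2 log(1/2)`.  Expert 1 is `W 0` and expert `m ≥ 2` is `W m.succ` for
`m : Fin 100`. -/
theorem meaningless_classifier_loglik
    (W : Fin 101 → Fin 2 → Fin 2 → ℝ)
    (hW0 : ∀ d c : Fin 2, W 0 d c = 1 / 2)
    (hWm : ∀ (m : Fin 100) (d c : Fin 2), W m.succ d c = if d = c then 1 else 0) :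
    (∑ c : Fin 2, ∑ c' : Fin 2, (1 / 4 : ℝ) *
        Real.log (∑ d : Fin 2,
          (1 / 2 : ℝ) * W 0 d c * ∏ m : Fin 100, W m.succ d c') =
      2 * Real.log (1 / 2)) ∧
    ∃ V : Fin 101 → Fin 2 → Fin 2 → ℝ, (∀ m, IsTransitionMatrix (V m)) ∧
      2 * Real.log (1 / 2) ≤
        ∑ c : Fin 2, ∑ c' : Fin 2, (1 / 4 : ℝ) *
          Real.log (∑ d : Fin 2,
            (1 / 2 : ℝ) * V 0 d c * ∏ m : Fin 100, V m.succ d c') := by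
  have hprod : ∀ d c' : Fin 2, (∏ m : Fin 100, W m.succ d c')
      = if d = c' then 1 else 0 := by
    intro d c'
    simp only [hWm]; split <;> simp
  have hlog : Real.log (1 / 4 : ℝ) = 2 * Real.log (1 / 2) := by
    rw [show (1 / 4 : ℝ) = (1 / 2) ^ 2 by norm_num, Real.log_pow]
    push_cast; ring
  have key : (∑ c : Fin 2, ∑ c' : Fin 2, (1 / 4 : ℝ) *
        Real.log (∑ d : Fin 2,
          (1 / 2 : ℝ) * W 0 d c * ∏ m : Fin 100, W m.succ d c') =
      2 * Real.log (1 / 2)) := by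
    simp only [hprod, hW0, Fin.sum_univ_two]
    norm_num [← hlog]
    ring
  refine ⟨key, W, ?_, key.ge⟩
  intro m
  rcases Fin.eq_zero_or_eq_succ m with rfl | ⟨k, rfl⟩
  · exact ⟨fun c c' => by rw [hW0]; norm_num,
      fun c => by simp [hW0, Fin.sum_univ_two]⟩
  · refine ⟨fun c c' => by rw [hWm]; split <;> norm_num,
      fun c => by fin_cases c <;> simp [hWm, Fin.sum_univ_two]⟩
end
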